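/- If a digraph D on n vertices contains ψ pairwise vertex-disjoint ICC subgraphs, where the i-th subgraph is a k_i-ICC digraph, then there is a valid index code for D of length n − Σ_{i=1}^ψ (k_i − 1): code each ICC subgraph with its ICC code and send the remaining messages uncoded. -/

import Mathlib

/-- An ICC digraph with `k` Type-I paths. `n1 i ≥ 1` is the number of vertices of
Type-I path `P_i`; `n2 i j` is the number of vertices of Type-II path `P_{i,j}`
(`0` if empty, and `n2 i i = 0`); `q i j` (1-based, `1 ≤ q i j ≤ n1 j`) is the
index of the vertex of `P_j` that the arc leaving `P_{i,j}` (or, if `P_{i,j}` is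
empty, the arc leaving the terminal vertex of `P_i`) points to. -/
structure ICCDigraph (k : ℕ) where
  n1 : Fin k → ℕ
  hn1 : ∀ i, 1 ≤ n1 i
  n2 : Fin k → Fin k → ℕ
  hdiag : ∀ i, n2 i i = 0
  q : Fin k → Fin k → ℕ
  hq1 : ∀ i j, 1 ≤ q i j
  hq2 : ∀ i j, q i j ≤ n1 j

namespace ICCDigraph

variable {k : ℕ} (D : ICCDigraph k)

/-- The vertex set: vertices `v_{a+1}^i = ⟨i, a⟩` of Type-I paths (0-based `a`),
and vertices `v_{b+1}^{ij} = ⟨(i,j), b⟩` of Type-II paths. -/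
abbrev Vtx : Type :=
  (Σ i : Fin k, Fin (D.n1 i)) ⊕ (Σ p : Fin k × Fin k, Fin (D.n2 p.1 p.2))

/-- The terminal vertex `v_{n_i}^i` of Type-I path `P_i`. -/
def terminal (i : Fin k) : D.Vtx :=
  Sum.inl ⟨i, ⟨D.n1 i - 1, by have := D.hn1 i; omega⟩⟩

/-- The arc relation of the ICC digraph: arcs along Type-I and Type-II paths,
and the interconnecting arcs. -/
def Arc : D.Vtx → D.Vtx → Prop
  | Sum.inl ⟨i, a⟩, Sum.inl ⟨j, a'⟩ =>
      (i = j ∧ (a' : ℕ) = (a : ℕ) + 1) ∨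
      (i ≠ j ∧ (a : ℕ) = D.n1 i - 1 ∧ D.n2 i j = 0 ∧ (a' : ℕ) = D.q i j - 1)
  | Sum.inl ⟨i, a⟩, Sum.inr ⟨p, b⟩ =>
      i = p.1 ∧ (a : ℕ) = D.n1 i - 1 ∧ (b : ℕ) = 0
  | Sum.inr ⟨p, b⟩, Sum.inr ⟨p', b'⟩ =>
      p = p' ∧ (b' : ℕ) = (b : ℕ) + 1
  | Sum.inr ⟨p, b⟩, Sum.inl ⟨j, a⟩ =>
      p.2 = j ∧ (b : ℕ) = D.n2 p.1 p.2 - 1 ∧ (a : ℕ) = D.q p.1 p.2 - 1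

/-- A closed directed walk (cycle) starting and ending at `v`, visiting the
vertices `v :: l`. -/
def IsClosedWalk (v : D.Vtx) (l : List D.Vtx) : Prop :=
  List.Chain D.Arc v (l ++ [v])

/-- `S` induces an acyclic subdigraph: no directed cycle lies within `S`. -/
def AcyclicOn (S : Finset D.Vtx) : Prop :=
  ¬ ∃ (v : D.Vtx) (l : List D.Vtx), v ∈ S ∧ (∀ u ∈ l, u ∈ S) ∧ D.IsClosedWalk v l

open Classical in
/-- `MAIS(D)`: the maximum order of an acyclic induced subdigraph. -/
noncomputable def mais : ℕ :=
  (Finset.univ.filter fun S : Finset D.Vtx => D.AcyclicOn S).sup Finset.card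

/-- The message (1-based index `a`) of the `a`-th vertex of Type-I path `P_i`
(`0` if out of range). -/
def msgI {t : ℕ} (x : D.Vtx → Fin t → ZMod 2) (i : Fin k) (a : ℕ) :
    Fin t → ZMod 2 :=
  if h : 1 ≤ a ∧ a ≤ D.n1 i then x (Sum.inl ⟨i, ⟨a - 1, by omega⟩⟩) else 0

/-- The message (1-based index `b`) of the `b`-th vertex of Type-II path
`P_{i,j}` (`0` if out of range). -/
def msgII {t : ℕ} (x : D.Vtx → Fin t → ZMod 2) (i j : Fin k) (b : ℕ) :
    Fin t → ZMod 2 :=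
  if h : 1 ≤ b ∧ b ≤ D.n2 i j then x (Sum.inr ⟨(i, j), ⟨b - 1, by show b - 1 < D.n2 i j; omega⟩⟩) else 0

/-- Index set of the ICC code's codewords: the `n_i - 1` codewords along each
Type-I path, the `n_{ij} - 1` codewords along each Type-II path, one codeword per
nonempty Type-II path, and the single codeword `⊕ᵢ x_{n_i}^i`. -/
abbrev CodeIdx : Type :=
  (Σ i : Fin k, Fin (D.n1 i - 1)) ⊕
    ((Σ p : Fin k × Fin k, Fin (D.n2 p.1 p.2 - 1)) ⊕
      (({p : Fin k × Fin k // 1 ≤ D.n2 p.1 p.2}) ⊕ Unit))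

/-- The ICC code: `w_a^i = x_a^i ⊕ x_{a+1}^i`, `w_b^{ij} = x_b^{ij} ⊕ x_{b+1}^{ij}`,
`w_{n_{ij}}^{ij} = x_{n_{ij}}^{ij} ⊕ x_{q_i}^j`, and `w' = ⊕ᵢ x_{n_i}^i`. -/
def code {t : ℕ} (x : D.Vtx → Fin t → ZMod 2) : D.CodeIdx → Fin t → ZMod 2
  | Sum.inl ⟨i, a⟩ => D.msgI x i ((a : ℕ) + 1) + D.msgI x i ((a : ℕ) + 2)
  | Sum.inr (Sum.inl ⟨p, b⟩) =>
      D.msgII x p.1 p.2 ((b : ℕ) + 1) + D.msgII x p.1 p.2 ((b : ℕ) + 2)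
  | Sum.inr (Sum.inr (Sum.inl ⟨p, _⟩)) =>
      D.msgII x p.1 p.2 (D.n2 p.1 p.2) + D.msgI x p.2 (D.q p.1 p.2)
  | Sum.inr (Sum.inr (Sum.inr _)) => ∑ i : Fin k, D.msgI x i (D.n1 i)

end ICCDigraph

/-!
A vertex *recovers* a function of the messages if some decoder computes it from the broadcast
codewords and the messages of its out-neighbours; recoverable functions are closed under sums and
differences. In an ICC digraph every codeword is the sum of two messages, so each one lets a vertex
step from a message to the next along a path. A non-terminal vertex subtracts its out-neighbour's
message from its own codeword. The terminal vertex of `P_i` walks, for each `j ≠ i`, from its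
out-neighbour towards `P_j` along `P_{i,j}` and `P_j` to the terminal message `x_{n_j}^j`, and
subtracts all of these from `w' = ⊕ⱼ x_{n_j}^j`. The ICC code has `k - 1` fewer codewords than
vertices; codes of disjoint subgraphs, together with the uncoded messages of the remaining
vertices, form a code for the whole digraph.
-/

open Finset

section IndexCode

variable {V I M : Type*}

def Recoverable (A : V → V → Prop) (E : (V → M) → I → M) (v : V) (φ : (V → M) → M) :
    Prop :=
  ∃ g : (I → M) → ({u // A v u} → M) → M, ∀ x, g (E x) (fun u => x u.1) = φ x

def IsIndexCode (A : V → V → Prop) (E : (V → M) → I → M) : Prop :=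
  ∀ v, Recoverable A E v fun x => x v

namespace Recoverable

variable {A : V → V → Prop} {E : (V → M) → I → M} {v : V} {φ ψ : (V → M) → M}

theorem of_arc {u : V} (h : A v u) : Recoverable A E v fun x => x u :=
  ⟨fun _ s => s ⟨u, h⟩, fun _ => rfl⟩

theorem codeword (c : I) : Recoverable A E v fun x => E x c :=
  ⟨fun w _ => w c, fun _ => rfl⟩

theorem congr (h : Recoverable A E v φ) (hφψ : ∀ x, φ x = ψ x) : Recoverable A E v ψ :=
  (funext hφψ : φ = ψ) ▸ h

theorem zero [Zero M] : Recoverable A E v 0 :=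
  ⟨fun _ _ => 0, fun _ => rfl⟩

theorem add [Add M] (hφ : Recoverable A E v φ) (hψ : Recoverable A E v ψ) :
    Recoverable A E v (φ + ψ) := by
  obtain ⟨g, hg⟩ := hφ
  obtain ⟨h, hh⟩ := hψ
  exact ⟨fun w s => g w s + h w s, fun x => by simp only [hg, hh, Pi.add_apply]⟩

theorem sub [Sub M] (hφ : Recoverable A E v φ) (hψ : Recoverable A E v ψ) :
    Recoverable A E v (φ - ψ) := by
  obtain ⟨g, hg⟩ := hφ
  obtain ⟨h, hh⟩ := hψ
  exact ⟨fun w s => g w s - h w s, fun x => by simp only [hg, hh, Pi.sub_apply]⟩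

theorem sum [AddCommMonoid M] {ι : Type*} (s : Finset ι) {φ : ι → (V → M) → M}
    (h : ∀ i ∈ s, Recoverable A E v (φ i)) : Recoverable A E v fun x => ∑ i ∈ s, φ i x :=
  (Finset.sum_induction φ (Recoverable A E v) (fun _ _ => add) zero h).congr
    fun x => Finset.sum_apply x s φ

end Recoverable

namespace IsIndexCode

variable {A : V → V → Prop}

theorem extend [Zero M] {E : (V → M) → I → M} (hE : IsIndexCode A E) {J : Type*}
    (ι : I ↪ J) :
    IsIndexCode A fun x => Function.extend ι (E x) 0 := fun v => by
  obtain ⟨g, hg⟩ := hE v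
  refine ⟨fun w s => g (w ∘ ι) s, fun x => ?_⟩
  simp only [Function.extend_comp ι.injective, hg]

theorem exists_fin [Zero M] [Fintype I] {E : (V → M) → I → M} (hE : IsIndexCode A E) {m : ℕ}
    (hm : Fintype.card I ≤ m) : ∃ E' : (V → M) → Fin m → M, IsIndexCode A E' :=
  let ⟨ι⟩ := Function.Embedding.nonempty_of_card_le (hm.trans (Fintype.card_fin m).ge)
  ⟨_, hE.extend ι⟩

theorem combine {J : Type*} {W : J → Type*} {B : ∀ j, W j → W j → Prop} {C : J → Type*}
    (f : ∀ j, W j → V) (hf : ∀ j u w, B j u w → A (f j u) (f j w))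
    {E : ∀ j, (W j → M) → C j → M} (hE : ∀ j, IsIndexCode (B j) (E j)) :
    IsIndexCode A fun x => Sum.elim (fun c : Σ j, C j => E c.1 (x ∘ f c.1) c.2)
      (fun v : {v // ∀ j, v ∉ Set.range (f j)} => x v) := fun v => by
  by_cases hv : ∀ j, v ∉ Set.range (f j)
  · exact ⟨fun w _ => w (Sum.inr ⟨v, hv⟩), fun _ => rfl⟩
  push Not at hv
  obtain ⟨j, u, rfl⟩ := hv
  obtain ⟨g, hg⟩ := hE j u
  exact ⟨fun w s => g (fun c => w (Sum.inl ⟨j, c⟩)) fun w' => s ⟨f j w', hf j u w' w'.2⟩,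
    fun x => hg (x ∘ f j)⟩

end IsIndexCode

end IndexCode

theorem Finset.card_subtype_forall_notMem_add_sum_card {α ι : Type*} [Fintype α] [Fintype ι]
    (S : ι → Finset α) (hS : Pairwise (Function.onFun Disjoint S)) :
    Nat.card {a // ∀ i, a ∉ S i} + ∑ i, #(S i) = Nat.card α := by
  classical
  have hcompl : univ.filter (fun a => ∀ i, a ∉ S i) = (univ.biUnion S)ᶜ := by
    ext a
    simp
  rw [← card_biUnion fun i _ j _ hij => hS hij, Nat.card_eq_fintype_card, Fintype.card_subtype,
    hcompl, card_compl_add_card, Nat.card_eq_fintype_card]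

namespace ICCDigraph

variable {k : ℕ} (D : ICCDigraph k)

theorem le_card_vtx : k ≤ Fintype.card D.Vtx := by
  have h : ∑ _j : Fin k, 1 ≤ ∑ j, D.n1 j := sum_le_sum fun j _ => D.hn1 j
  simp only [sum_const, card_univ, Fintype.card_fin, smul_eq_mul, mul_one] at h
  simp only [Fintype.card_sum, Fintype.card_sigma, Fintype.card_fin]
  omega

theorem card_codeIdx_add (hk : 1 ≤ k) :
    Fintype.card D.CodeIdx + (k - 1) = Fintype.card D.Vtx := by
  classical
  have hI : ∑ j, (D.n1 j - 1) + k = ∑ j, D.n1 j := by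
    simpa [sum_add_distrib] using
      sum_congr rfl fun j (_ : j ∈ univ) => Nat.sub_add_cancel (D.hn1 j)
  have hII : ∑ p : Fin k × Fin k, (D.n2 p.1 p.2 - 1) +
      #(univ.filter fun p : Fin k × Fin k => 1 ≤ D.n2 p.1 p.2) =
      ∑ p : Fin k × Fin k, D.n2 p.1 p.2 := by
    rw [card_filter, ← sum_add_distrib]
    exact sum_congr rfl fun p _ => by split <;> omega
  simp only [Fintype.card_sum, Fintype.card_sigma, Fintype.card_fin, Fintype.card_subtype,
    Fintype.card_unit]
  omega

theorem q_sub_one_lt (i j : Fin k) : D.q i j - 1 < D.n1 j := by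
  have := D.hq1 i j
  have := D.hq2 i j
  omega

variable {t : ℕ}

theorem msgI_succ (x : D.Vtx → Fin t → ZMod 2) {j : Fin k} (a : Fin (D.n1 j)) :
    D.msgI x j (a + 1) = x (Sum.inl ⟨j, a⟩) := by
  simp [msgI, a.isLt]

theorem msgII_succ (x : D.Vtx → Fin t → ZMod 2) {i j : Fin k} (b : Fin (D.n2 i j)) :
    D.msgII x i j (b + 1) = x (Sum.inr ⟨(i, j), b⟩) := by
  simp [msgII, b.isLt]

theorem msgI_n1 (x : D.Vtx → Fin t → ZMod 2) (j : Fin k) :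
    D.msgI x j (D.n1 j) = x (D.terminal j) := by
  have := D.msgI_succ x ⟨D.n1 j - 1, Nat.sub_lt (D.hn1 j) one_pos⟩
  rwa [Nat.sub_add_cancel (D.hn1 j)] at this

variable {u : D.Vtx}

theorem recoverable_msgI_of_arc {j : Fin k} (a : Fin (D.n1 j)) (h : D.Arc u (Sum.inl ⟨j, a⟩)) :
    Recoverable D.Arc D.code u fun x : D.Vtx → Fin t → ZMod 2 => D.msgI x j (a + 1) :=
  (Recoverable.of_arc h).congr fun x => (D.msgI_succ x a).symm

theorem recoverable_msgII_of_arc {i j : Fin k} (b : Fin (D.n2 i j))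
    (h : D.Arc u (Sum.inr ⟨(i, j), b⟩)) :
    Recoverable D.Arc D.code u fun x : D.Vtx → Fin t → ZMod 2 => D.msgII x i j (b + 1) :=
  (Recoverable.of_arc h).congr fun x => (D.msgII_succ x b).symm

theorem recoverable_msgI_q_of_arc {i j : Fin k}
    (h : D.Arc u (Sum.inl ⟨j, ⟨D.q i j - 1, D.q_sub_one_lt i j⟩⟩)) :
    Recoverable D.Arc D.code u fun x : D.Vtx → Fin t → ZMod 2 => D.msgI x j (D.q i j) := by
  have := D.recoverable_msgI_of_arc (t := t) _ h
  rwa [Nat.sub_add_cancel (D.hq1 i j)] at this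

theorem recoverable_msgI_add_two_iff {j : Fin k} {a : ℕ} (ha : a < D.n1 j - 1) :
    (Recoverable D.Arc D.code u fun x : D.Vtx → Fin t → ZMod 2 => D.msgI x j (a + 2)) ↔
      Recoverable D.Arc D.code u fun x : D.Vtx → Fin t → ZMod 2 => D.msgI x j (a + 1) := by
  have hc := Recoverable.codeword (A := D.Arc) (v := u) (E := D.code (t := t))
    (Sum.inl ⟨j, ⟨a, ha⟩⟩)
  exact ⟨fun h => (hc.sub h).congr fun x => add_sub_cancel_right _ _,
    fun h => (hc.sub h).congr fun x => add_sub_cancel_left _ _⟩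

theorem recoverable_msgII_add_two_iff {i j : Fin k} {b : ℕ} (hb : b < D.n2 i j - 1) :
    (Recoverable D.Arc D.code u fun x : D.Vtx → Fin t → ZMod 2 => D.msgII x i j (b + 2)) ↔
      Recoverable D.Arc D.code u fun x : D.Vtx → Fin t → ZMod 2 => D.msgII x i j (b + 1) := by
  have hc := Recoverable.codeword (A := D.Arc) (v := u) (E := D.code (t := t))
    (Sum.inr (Sum.inl ⟨(i, j), ⟨b, hb⟩⟩))
  exact ⟨fun h => (hc.sub h).congr fun x => add_sub_cancel_right _ _,
    fun h => (hc.sub h).congr fun x => add_sub_cancel_left _ _⟩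

theorem recoverable_msgI_q_iff {i j : Fin k} (h : 1 ≤ D.n2 i j) :
    (Recoverable D.Arc D.code u fun x : D.Vtx → Fin t → ZMod 2 => D.msgI x j (D.q i j)) ↔
      Recoverable D.Arc D.code u
        fun x : D.Vtx → Fin t → ZMod 2 => D.msgII x i j (D.n2 i j) := by
  have hc := Recoverable.codeword (A := D.Arc) (v := u) (E := D.code (t := t))
    (Sum.inr (Sum.inr (Sum.inl ⟨(i, j), h⟩)))
  exact ⟨fun h => (hc.sub h).congr fun x => add_sub_cancel_right _ _,
    fun h => (hc.sub h).congr fun x => add_sub_cancel_left _ _⟩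

theorem recoverable_msgI_of_le {j : Fin k} {a m : ℕ} (ha : 1 ≤ a) (ham : a ≤ m)
    (hm : m ≤ D.n1 j)
    (h : Recoverable D.Arc D.code u fun x : D.Vtx → Fin t → ZMod 2 => D.msgI x j a) :
    Recoverable D.Arc D.code u fun x : D.Vtx → Fin t → ZMod 2 => D.msgI x j m := by
  induction m, ham using Nat.le_induction with
  | base => exact h
  | succ m ham ih =>
    obtain ⟨c, rfl⟩ : ∃ c, m = c + 1 := ⟨m - 1, by omega⟩
    exact (D.recoverable_msgI_add_two_iff (by omega)).2 (ih (by omega))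

theorem recoverable_msgII_of_le {i j : Fin k} {m : ℕ} (hm1 : 1 ≤ m) (hm : m ≤ D.n2 i j)
    (h : Recoverable D.Arc D.code u fun x : D.Vtx → Fin t → ZMod 2 => D.msgII x i j 1) :
    Recoverable D.Arc D.code u fun x : D.Vtx → Fin t → ZMod 2 => D.msgII x i j m := by
  induction m, hm1 using Nat.le_induction with
  | base => exact h
  | succ m ham ih =>
    obtain ⟨c, rfl⟩ : ∃ c, m = c + 1 := ⟨m - 1, by omega⟩
    exact (D.recoverable_msgII_add_two_iff (by omega)).2 (ih (by omega))

theorem recoverable_msgI_terminal {i j : Fin k} (hij : i ≠ j) :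
    Recoverable D.Arc D.code (D.terminal i)
      fun x : D.Vtx → Fin t → ZMod 2 => D.msgI x j (D.n1 j) := by
  suffices Recoverable D.Arc D.code (D.terminal i)
      fun x : D.Vtx → Fin t → ZMod 2 => D.msgI x j (D.q i j) from
    D.recoverable_msgI_of_le (D.hq1 i j) (D.hq2 i j) le_rfl this
  by_cases h0 : D.n2 i j = 0
  · exact D.recoverable_msgI_q_of_arc (by unfold terminal; exact Or.inr ⟨hij, rfl, h0, rfl⟩)
  · have hpos : 1 ≤ D.n2 i j := Nat.one_le_iff_ne_zero.2 h0
    refine (D.recoverable_msgI_q_iff hpos).2 (D.recoverable_msgII_of_le hpos le_rfl ?_)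
    exact D.recoverable_msgII_of_arc ⟨0, hpos⟩ (by unfold terminal; exact ⟨rfl, rfl, rfl⟩)

theorem isIndexCode_code : IsIndexCode D.Arc (D.code (t := t)) := by
  rintro (⟨j, a⟩ | ⟨⟨i, j⟩, b⟩)
  · rcases Nat.lt_or_ge ((a : ℕ) + 1) (D.n1 j) with ha | ha
    · have h := D.recoverable_msgI_of_arc (t := t) (u := Sum.inl ⟨j, a⟩) ⟨a + 1, ha⟩
        (Or.inl ⟨rfl, rfl⟩)
      exact ((D.recoverable_msgI_add_two_iff (by omega)).1 h).congr fun x => D.msgI_succ x a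
    have hterm : Sum.inl ⟨j, a⟩ = D.terminal j := by
      unfold terminal
      congr
      exact Fin.ext (by simp only; omega)
    rw [hterm]
    have hothers := Recoverable.sum (univ.erase j) fun i hi =>
      D.recoverable_msgI_terminal (t := t) (ne_of_mem_erase hi).symm
    refine ((Recoverable.codeword (Sum.inr (Sum.inr (Sum.inr ())))).sub hothers).congr
      fun x => ?_
    change ∑ i, D.msgI x i (D.n1 i) - _ = _
    rw [← add_sum_erase _ _ (mem_univ j), add_sub_cancel_right, msgI_n1]
  · have hblt : (b : ℕ) < D.n2 i j := b.isLt
    rcases Nat.lt_or_ge ((b : ℕ) + 1) (D.n2 i j) with hb | hb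
    · have h := D.recoverable_msgII_of_arc (t := t) (u := Sum.inr ⟨(i, j), b⟩) ⟨b + 1, hb⟩
        ⟨rfl, rfl⟩
      exact ((D.recoverable_msgII_add_two_iff (by omega)).1 h).congr fun x => D.msgII_succ x b
    have h := D.recoverable_msgI_q_of_arc (t := t) (u := Sum.inr ⟨(i, j), b⟩) (i := i) (j := j)
      ⟨rfl, show (b : ℕ) = D.n2 i j - 1 by omega, rfl⟩
    exact ((D.recoverable_msgI_q_iff (by omega)).1 h).congr fun x => by
      rw [← D.msgII_succ x b, show (b : ℕ) + 1 = D.n2 i j by omega]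

theorem exists_isIndexCode (t : ℕ) :
    ∃ E : (D.Vtx → Fin t → ZMod 2) → Fin (Fintype.card D.Vtx - (k - 1)) →
      Fin t → ZMod 2,
      IsIndexCode D.Arc E := by
  rcases Nat.eq_zero_or_pos k with rfl | hk
  -- for `k = 0` there are no vertices, but `CodeIdx` still contains the codeword `w'`
  · exact ⟨fun _ _ => 0, by rintro (⟨i, _⟩ | ⟨⟨i, _⟩, _⟩) <;> exact i.elim0⟩
  · exact D.isIndexCode_code.exists_fin (by have := D.card_codeIdx_add hk; omega)

end ICCDigraph

/-- If a digraph on `n` vertices with arc relation `A` contains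
`ψ` pairwise vertex-disjoint induced subdigraphs, the `i`-th being a
`k_i`-ICC digraph, then there is a valid index code for the whole problem of
length `n - ∑ᵢ (k_i - 1)` packets: code each ICC subgraph with its ICC code and
send the remaining messages uncoded. -/
theorem stmt18 (n ψ t : ℕ) (A : Fin n → Fin n → Prop)
    (kvec : Fin ψ → ℕ)
    (Ds : (i : Fin ψ) → ICCDigraph (kvec i))
    (S : Fin ψ → Finset (Fin n))
    (hdisj : ∀ i j, i ≠ j → Disjoint (S i) (S j))
    (e : (i : Fin ψ) → (Ds i).Vtx ≃ {v : Fin n // v ∈ S i})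
    (hind : ∀ (i : Fin ψ) (u v : (Ds i).Vtx),
      (Ds i).Arc u v ↔ A ((e i) u).1 ((e i) v).1) :
    ∃ E : (Fin n → Fin t → ZMod 2) →
        Fin (n - ∑ i : Fin ψ, (kvec i - 1)) → Fin t → ZMod 2,
      ∀ v : Fin n,
        ∃ g : (Fin (n - ∑ i : Fin ψ, (kvec i - 1)) → Fin t → ZMod 2) →
            ({u : Fin n // A v u} → Fin t → ZMod 2) → (Fin t → ZMod 2),
          ∀ x, g (E x) (fun u => x u.1) = x v := by
  classical
  choose E hE using fun i => (Ds i).exists_isIndexCode t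
  refine (IsIndexCode.combine (fun i w => ((e i) w).1) (fun i u w h => (hind i u w).1 h)
    hE).exists_fin ?_
  have hrange : ∀ i, Set.range (fun w => ((e i) w).1) = S i := fun i => by
    ext v
    exact ⟨fun ⟨w, hw⟩ => hw ▸ (e i w).2, fun hv => ⟨(e i).symm ⟨v, hv⟩, by simp⟩⟩
  have hcard : ∀ i, Fintype.card (Ds i).Vtx = #(S i) := fun i => by
    rw [Fintype.card_congr (e i), Fintype.card_coe]
  have hsum : ∑ i, (#(S i) - (kvec i - 1)) + ∑ i, (kvec i - 1) = ∑ i, #(S i) := by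
    rw [← sum_add_distrib]
    refine sum_congr rfl fun i _ => Nat.sub_add_cancel ?_
    exact hcard i ▸ (Nat.sub_le _ _).trans (Ds i).le_card_vtx
  have huncoded :
      Fintype.card {v // ∀ i, v ∉ Set.range fun w => ((e i) w).1} + ∑ i, #(S i) = n := by
    rw [← Nat.card_eq_fintype_card,
      Nat.card_congr (Equiv.subtypeEquivRight (q := fun v => ∀ i, v ∉ S i)
        fun v => by simp only [hrange, mem_coe]),
      card_subtype_forall_notMem_add_sum_card S hdisj, Nat.card_fin]
  simp only [Fintype.card_sum, Fintype.card_sigma, Fintype.card_fin, hcard]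
  omega
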